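/- arXiv:1503.06833 — 5 statements merged into one kernel-verified Lean document; each statement's English description precedes it below -/
import Mathlib

section
/- Let q(z) be a monic polynomial of degree p with complex coefficients and set r = |q(1)| with r ≥ 1. If every root ζ of q satisfies |ζ| ≤ r^{1/p} − 1, then all roots are equal to 1 − r^{1/p}, i.e. q(z) = (z − (1 − r^{1/p}))^p. -/
/-!
Write `b = r^{1/p}`, so that `b^p = r`. Since `q` is monic, `r = |q(1)| = ∏ |1 - ζ|` over the roots,
and each factor satisfies `|1 - ζ| ≤ 1 + |ζ| ≤ b`. As there are `p` factors with product `b^p`,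
every factor equals `b`; then `ζ` attains both the triangle inequality `|1 - ζ| ≤ 1 + |ζ|` and the
bound `|ζ| ≤ b - 1` with equality, which forces `ζ = 1 - b`.
-/

open Polynomial

theorem Multiset.forall_eq_of_prod_eq_pow_card {R : Type*} [CommSemiring R] [LinearOrder R]
    [IsStrictOrderedRing R] {s : Multiset R} {c : R} (h0 : ∀ x ∈ s, 0 ≤ x)
    (hle : ∀ x ∈ s, x ≤ c) (hprod : s.prod = c ^ card s) : ∀ x ∈ s, x = c := by
  intro x hx
  by_contra hne
  have hlt : x < c := lt_of_le_of_ne (hle x hx) hne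
  obtain ⟨t, rfl⟩ := exists_cons_of_mem hx
  have ht : t.prod ≤ c ^ card t := by
    simpa using prod_map_le_prod_map₀ id (fun _ => c) (fun y hy => h0 y (mem_cons_of_mem hy))
      (fun y hy => hle y (mem_cons_of_mem hy))
  have hpos : 0 < c ^ card t := pow_pos ((h0 x hx).trans_lt hlt) _
  rw [prod_cons, card_cons, pow_succ'] at hprod
  exact (mul_lt_mul_of_lt_of_le_of_nonneg_of_pos hlt ht (h0 x hx) hpos).ne hprod

theorem Complex.eq_one_sub_of_norm_le_sub_one_of_le_norm_one_sub {z : ℂ} {b : ℝ}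
    (hz : ‖z‖ ≤ b - 1) (h : b ≤ ‖1 - z‖) : z = 1 - b := by
  have hb : 0 ≤ b - 1 := (norm_nonneg z).trans hz
  have hz2 : z.re ^ 2 + z.im ^ 2 ≤ (b - 1) ^ 2 := by
    have := pow_le_pow_left₀ (norm_nonneg z) hz 2
    rwa [Complex.sq_norm, Complex.normSq_apply, ← sq, ← sq] at this
  have h2 : b ^ 2 ≤ (1 - z.re) ^ 2 + z.im ^ 2 := by
    have := pow_le_pow_left₀ (by linarith) h 2
    rwa [Complex.sq_norm, Complex.normSq_apply, ← sq, ← sq, Complex.sub_re, Complex.sub_im,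
      Complex.one_re, Complex.one_im, zero_sub, neg_sq] at this
  have hre : z.re = 1 - b := by nlinarith
  have him : z.im = 0 := by nlinarith
  apply Complex.ext <;> simp [hre, him]

theorem Polynomial.Monic.norm_eval_eq_prod_roots {K : Type*} [NormedField K] [IsAlgClosed K]
    {f : K[X]} (hf : f.Monic) (x : K) : ‖f.eval x‖ = (f.roots.map fun z => ‖x - z‖).prod := by
  rw [(IsAlgClosed.splits f).eval_eq_prod_roots_of_monic hf]
  simpa [Multiset.map_map] using map_multiset_prod (normHom : K →*₀ ℝ) (f.roots.map (x - ·))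

theorem Polynomial.Monic.eq_X_sub_C_pow_of_forall_mem_roots_eq {K : Type*} [Field K]
    [IsAlgClosed K] {f : K[X]} (hf : f.Monic) {a : K} (h : ∀ z ∈ f.roots, z = a) :
    f = (X - C a) ^ f.natDegree := by
  conv_lhs => rw [(IsAlgClosed.splits f).eq_prod_roots_of_monic hf]
  rw [← IsAlgClosed.card_roots_eq_natDegree, Multiset.eq_replicate_card.mpr h]
  simp only [Multiset.map_replicate, Multiset.prod_replicate, Multiset.card_replicate]

theorem stmt2_general (p : ℕ) (hp : 1 ≤ p) (q : Polynomial ℂ)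
    (hmonic : q.Monic) (hdeg : q.natDegree = p)
    (r : ℝ) (hr : r = ‖q.eval 1‖)
    (hroots : ∀ z : ℂ, q.IsRoot z → ‖z‖ ≤ r ^ ((p : ℝ)⁻¹) - 1) :
    q = (X - C ((1 : ℂ) - ((r ^ ((p : ℝ)⁻¹) : ℝ) : ℂ))) ^ p := by
  set b := r ^ ((p : ℝ)⁻¹)
  have hbp : b ^ p = r := Real.rpow_inv_natCast_pow (hr ▸ norm_nonneg _) (by omega)
  have hroot_le (z : ℂ) (hz : z ∈ q.roots) : ‖z‖ ≤ b - 1 := hroots z (isRoot_of_mem_roots hz)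
  have hfactor_le : ∀ x ∈ q.roots.map (‖1 - ·‖), x ≤ b := by
    simp only [Multiset.forall_mem_map_iff]
    intro z hz
    linarith [norm_sub_le (1 : ℂ) z, norm_one (α := ℂ), hroot_le z hz]
  have hprod : (q.roots.map (‖1 - ·‖)).prod = b ^ Multiset.card (q.roots.map (‖1 - ·‖)) := by
    rw [Multiset.card_map, IsAlgClosed.card_roots_eq_natDegree, hdeg, hbp, hr,
      hmonic.norm_eval_eq_prod_roots]
  have hfactor_eq := Multiset.forall_eq_of_prod_eq_pow_card
    (Multiset.forall_mem_map_iff.mpr fun _ _ => norm_nonneg _) hfactor_le hprod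
  rw [← hdeg]
  exact hmonic.eq_X_sub_C_pow_of_forall_mem_roots_eq fun z hz =>
    Complex.eq_one_sub_of_norm_le_sub_one_of_le_norm_one_sub (hroot_le z hz)
      (hfactor_eq _ (Multiset.mem_map_of_mem _ hz)).ge

theorem stmt2 (p : ℕ) (hp : 1 ≤ p) (q : Polynomial ℂ)
    (hmonic : q.Monic) (hdeg : q.natDegree = p)
    (r : ℝ) (hr : r = ‖q.eval 1‖) (hr1 : 1 ≤ r)
    (hroots : ∀ z : ℂ, q.IsRoot z → ‖z‖ ≤ r ^ ((p : ℝ)⁻¹) - 1) :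
    q = (X - C ((1 : ℂ) - ((r ^ ((p : ℝ)⁻¹) : ℝ) : ℂ))) ^ p :=
  stmt2_general p hp q hmonic hdeg r hr hroots
end

section
/- For p = 3 the real-coefficient assumption in the root-radius lower bound is necessary: the complex monic cubic u(z) = (z − (1 − (1/2)e^{iπ/3}))^3 satisfies u(1) = −1/8 < 0, yet the maximum modulus of its roots is strictly less than 1. -/
/-!
Since `1 - ζ = e^{iπ/3} / 2`, we get `u(1) = (1 - ζ)^3 = e^{iπ} / 8 = -1/8`. The only root is `ζ`,
and the law of cosines gives `‖ζ‖² = 1 - 2 · (1/2) · cos (π/3) + 1/4 = 3/4`.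
-/

open Polynomial Complex Real

lemma Polynomial.isRoot_X_sub_C_pow_iff {R : Type*} [CommRing R] [IsDomain R] {a z : R} {n : ℕ}
    (hn : n ≠ 0) : ((X - C a) ^ n).IsRoot z ↔ z = a := by
  simp [IsRoot, pow_eq_zero_iff hn, sub_eq_zero]

lemma Complex.sq_norm_one_sub_mul_exp_mul_I (r θ : ℝ) :
    ‖1 - r * exp (θ * I)‖ ^ 2 = 1 - 2 * r * Real.cos θ + r ^ 2 := by
  rw [Complex.sq_norm, normSq_apply]
  simp only [sub_re, sub_im, one_re, one_im, re_ofReal_mul, im_ofReal_mul, exp_ofReal_mul_I_re,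
    exp_ofReal_mul_I_im]
  linear_combination r ^ 2 * Real.sin_sq_add_cos_sq θ

lemma Complex.exp_pi_mul_I_div_three_pow_three : exp (π * I / 3) ^ 3 = -1 := by
  rw [← Complex.exp_nat_mul, ← exp_pi_mul_I]
  ring_nf

theorem stmt4 (ζ : ℂ) (hζ : ζ = 1 - (1/2) * Complex.exp (Real.pi * Complex.I / 3))
    (u : Polynomial ℂ) (hu : u = (X - C ζ) ^ 3) :
    u.eval 1 = -(1/8) ∧ ∀ z : ℂ, u.IsRoot z → ‖z‖ < 1 := by
  subst hu
  constructor
  · simp only [eval_pow, eval_sub, eval_C, eval_X, hζ, sub_sub_cancel, mul_pow,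
      exp_pi_mul_I_div_three_pow_three]
    norm_num
  · intro z hz
    rw [isRoot_X_sub_C_pow_iff three_ne_zero] at hz
    have hsq : ‖z‖ ^ 2 = 3 / 4 := by
      have hζ' : ζ = 1 - ((1 / 2 : ℝ) : ℂ) * exp ((π / 3 : ℝ) * I) := by
        rw [hζ]
        push_cast
        ring_nf
      rw [hz, hζ', sq_norm_one_sub_mul_exp_mul_I, Real.cos_pi_div_three]
      norm_num
    nlinarith [norm_nonneg z]
end

section
/- Let 0 < μ ≤ L and p a positive integer, and let κ = L/μ. Then for every real ν ∈ (−2^p/L, 0) with both −νμ and −νL in [0, 2^p], max{ |(−νμ)^{1/p} − 1|, |(−νL)^{1/p} − 1| } ≥ (κ^{1/p} − 1)/(κ^{1/p} + 1). -/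
/-!
With `a = (-νμ)^(1/p)` and `k = κ^(1/p)` the second root is `a k`. If `|a - 1|` and `|a k - 1|` were
both below `c = (k - 1)/(k + 1)`, then `a > 1 - c = 2/(k + 1)` and `a k < 1 + c = 2k/(k + 1)`, which
are incompatible after multiplying the first inequality by `k`.
-/

theorem sub_one_div_add_one_le_max_abs_sub_one {a k : ℝ} (hk : 0 ≤ k) :
    (k - 1) / (k + 1) ≤ max |a - 1| |a * k - 1| := by
  by_contra! h
  have hk1 : 0 < k + 1 := by linarith
  have ha_lower : 2 / (k + 1) < a := by
    have := (abs_lt.mp ((le_max_left _ _).trans_lt h)).1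
    rw [← neg_div, div_lt_iff₀ hk1] at this
    rw [div_lt_iff₀ hk1]
    linarith
  have hak_upper : a * k < 2 * k / (k + 1) := by
    have := (abs_lt.mp ((le_max_right _ _).trans_lt h)).2
    rw [lt_div_iff₀ hk1] at this
    rw [lt_div_iff₀ hk1]
    linarith
  have := mul_le_mul_of_nonneg_right ha_lower.le hk
  rw [div_mul_eq_mul_div] at this
  linarith

theorem stmt6_general (μ L : ℝ) (hμ : 0 < μ) (hμL : μ ≤ L) (p : ℕ)
    (ν : ℝ) (hν2 : ν < 0) :
    ((L / μ) ^ ((p : ℝ)⁻¹) - 1) / ((L / μ) ^ ((p : ℝ)⁻¹) + 1) ≤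
      max |(-ν * μ) ^ ((p : ℝ)⁻¹) - 1| |(-ν * L) ^ ((p : ℝ)⁻¹) - 1| := by
  have hνμ : 0 ≤ -ν * μ := mul_nonneg (neg_nonneg.mpr hν2.le) hμ.le
  have hκ : 0 ≤ L / μ := div_nonneg (hμ.le.trans hμL) hμ.le
  have hνL : -ν * L = -ν * μ * (L / μ) := by field_simp
  rw [hνL, Real.mul_rpow hνμ hκ]
  exact sub_one_div_add_one_le_max_abs_sub_one (Real.rpow_nonneg hκ _)

theorem stmt6 (μ L : ℝ) (hμ : 0 < μ) (hμL : μ ≤ L) (p : ℕ) (hp : 1 ≤ p)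
    (ν : ℝ) (hν1 : -2 ^ p / L < ν) (hν2 : ν < 0)
    (h1 : -ν * μ ≤ 2 ^ p) (h2 : -ν * L ≤ 2 ^ p) :
    ((L / μ) ^ ((p : ℝ)⁻¹) - 1) / ((L / μ) ^ ((p : ℝ)⁻¹) + 1) ≤
      max |(-ν * μ) ^ ((p : ℝ)⁻¹) - 1| |(-ν * L) ^ ((p : ℝ)⁻¹) - 1| :=
  stmt6_general μ L hμ hμL p ν hν2
end

section
/- With E as above and α^0 = (1/√2, −1/√2, 0, …, 0) ∈ ℝ^n, for every K ≥ 0 one has ‖E^K α^0‖ = (1 − 1/(2/λ + n))^K, and consequently ‖E^K α^0‖ ≥ exp(−K/(2/λ + n − 1)). -/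
/-!
Because the entries of `α0` sum to zero, the `j`-th row of `∑ i, e_i u_iᵀ` acts on `α0` as
multiplication by `1 - c` with `c = 2 / (2 + λ n)`. Hence `α0` is an eigenvector of `E` for
`μ = 1 - (1 - c) / n = 1 - 1 / (2/λ + n)`, and `‖E^K α0‖ = μ^K ‖α0‖ = μ^K`.
The lower bound is `log μ ≥ 1 - μ⁻¹ = -1 / (2/λ + n - 1)`.
-/

open Matrix

section RankOneSum

variable {ι R : Type*} [Fintype ι] [DecidableEq ι] [CommRing R]

theorem sum_vecMulVec_single_mulVec (w : ι → ι → R) (v : ι → R) :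
    (∑ i, vecMulVec (Pi.single i 1) (w i)) *ᵥ v = fun j => w j ⬝ᵥ v := by
  ext j
  simp [Matrix.sum_mulVec, vecMulVec_mulVec, Pi.single_apply]

theorem ite_dotProduct (c : R) (j : ι) (v : ι → R) :
    (fun k => if k = j then 1 else c) ⬝ᵥ v = (1 - c) * v j + c * ∑ k, v k := by
  have : ∀ k, (if k = j then 1 else c) * v k = (if k = j then (1 - c) * v k else 0) + c * v k := by
    intro k; split_ifs <;> ring
  simp only [dotProduct, this, Finset.sum_add_distrib, Finset.sum_ite_eq', Finset.mem_univ,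
    if_true, Finset.mul_sum]

theorem mulVec_eq_smul_of_sum_eq_zero (s c : R) {v : ι → R} (hv : ∑ k, v k = 0) :
    (1 - s • ∑ i, vecMulVec (Pi.single i 1) (fun k => if k = i then 1 else c)) *ᵥ v =
      (1 - s * (1 - c)) • v := by
  ext j
  simp only [sub_mulVec, one_mulVec, smul_mulVec, sum_vecMulVec_single_mulVec, ite_dotProduct, hv,
    mul_zero, add_zero, Pi.sub_apply, Pi.smul_apply, smul_eq_mul]
  ring

theorem pow_mulVec_of_mulVec_eq_smul {A : Matrix ι ι R} {v : ι → R} {μ : R}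
    (h : A *ᵥ v = μ • v) (K : ℕ) : (A ^ K) *ᵥ v = μ ^ K • v := by
  induction K with
  | zero => simp
  | succ k ih => rw [pow_succ', ← mulVec_mulVec, ih, mulVec_smul, h, smul_smul, ← pow_succ]

end RankOneSum

theorem norm_toEuclideanLin_pow_of_mulVec_eq_smul {ι : Type*} [Fintype ι] [DecidableEq ι]
    {A : Matrix ι ι ℝ} {x : EuclideanSpace ℝ ι} {μ : ℝ} (h : A *ᵥ x.ofLp = μ • x.ofLp) (K : ℕ) :
    ‖toEuclideanLin (A ^ K) x‖ = |μ| ^ K * ‖x‖ := by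
  rw [toLpLin_apply, pow_mulVec_of_mulVec_eq_smul h, WithLp.toLp_smul, WithLp.toLp_ofLp,
    norm_smul, Real.norm_eq_abs, abs_pow]

section TwoPointVector

variable {ι : Type*} [Fintype ι] [DecidableEq ι] {i j : ι} {a : ℝ} {x : EuclideanSpace ℝ ι}

theorem sum_eq_zero_of_eq_ite (hij : i ≠ j)
    (hx : ∀ k, x k = if k = i then a else if k = j then -a else 0) : ∑ k, x k = 0 := by
  rw [Fintype.sum_eq_add i j hij fun k hk => by simp [hx, hk.1, hk.2]]
  simp [hx, hij.symm]

theorem norm_eq_of_eq_ite (hij : i ≠ j)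
    (hx : ∀ k, x k = if k = i then a else if k = j then -a else 0) : ‖x‖ = √2 * |a| := by
  rw [EuclideanSpace.norm_eq, Fintype.sum_eq_add i j hij fun k hk => by simp [hx, hk.1, hk.2]]
  simp only [hx, if_pos, if_neg hij.symm, Real.norm_eq_abs, abs_neg, sq_abs]
  rw [← two_mul, Real.sqrt_mul zero_le_two, Real.sqrt_sq_eq_abs]

end TwoPointVector

theorem exp_one_sub_inv_le {y : ℝ} (hy : 0 < y) : Real.exp (1 - y⁻¹) ≤ y :=
  (Real.le_log_iff_exp_le hy).1 (Real.one_sub_inv_le_log_of_pos hy)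

theorem one_div_mul_one_sub_two_div {lam x : ℝ} (hlam : 0 < lam) (hx : 0 < x) :
    1 / x * (1 - 2 / (2 + lam * x)) = 1 / (2 / lam + x) := by
  field_simp
  ring

theorem stmt13 (n : ℕ) (hn : 2 ≤ n) (lam : ℝ) (hlam : 0 < lam)
    (u : Fin n → Fin n → ℝ)
    (hu : ∀ i j, u i j = if j = i then 1 else 2 / (2 + lam * n))
    (E : Matrix (Fin n) (Fin n) ℝ)
    (hE : E = 1 - (1 / (n : ℝ)) • ∑ i : Fin n, Matrix.vecMulVec (Pi.single i 1) (u i))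
    (α0 : EuclideanSpace ℝ (Fin n))
    (hα0 : ∀ j : Fin n, α0 j =
      if (j : ℕ) = 0 then 1 / Real.sqrt 2
      else if (j : ℕ) = 1 then -(1 / Real.sqrt 2) else 0)
    (K : ℕ) :
    ‖Matrix.toEuclideanLin (E ^ K) α0‖ = (1 - 1 / (2 / lam + n)) ^ K ∧
    Real.exp (-(K : ℝ) / (2 / lam + n - 1)) ≤ ‖Matrix.toEuclideanLin (E ^ K) α0‖ := by
  have hn2 : (2 : ℝ) ≤ n := by exact_mod_cast hn
  set x : ℝ := 2 / lam + n
  have hx : 1 < x := by have := div_pos two_pos hlam; linarith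
  have hμ : 0 < 1 - 1 / x := by rw [sub_pos, div_lt_one (by linarith)]; exact hx
  have hα0' : ∀ k, α0 k = if k = ⟨0, by omega⟩ then 1 / √2
      else if k = ⟨1, by omega⟩ then -(1 / √2) else 0 := by
    simpa only [Fin.ext_iff] using hα0
  have hne : (⟨0, by omega⟩ : Fin n) ≠ ⟨1, by omega⟩ := by simp [Fin.ext_iff]
  have heig : E *ᵥ α0.ofLp = (1 - 1 / x) • α0.ofLp := by
    rw [hE, funext₂ hu, mulVec_eq_smul_of_sum_eq_zero _ _ (sum_eq_zero_of_eq_ite hne hα0'),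
      one_div_mul_one_sub_two_div hlam (by linarith)]
  have hnorm : ‖toEuclideanLin (E ^ K) α0‖ = (1 - 1 / x) ^ K := by
    rw [norm_toEuclideanLin_pow_of_mulVec_eq_smul heig, norm_eq_of_eq_ite hne hα0',
      abs_of_pos hμ, abs_of_pos (by positivity), mul_one_div_cancel (by positivity), mul_one]
  refine ⟨hnorm, hnorm ▸ ?_⟩
  calc Real.exp (-(K : ℝ) / (x - 1)) = Real.exp (1 - (1 - 1 / x)⁻¹) ^ K := by
        rw [← Real.exp_nat_mul]
        have : x - 1 ≠ 0 := by linarith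
        congr 1
        field_simp
        ring
    _ ≤ (1 - 1 / x) ^ K := pow_le_pow_left₀ (Real.exp_pos _).le (exp_one_sub_inv_le hμ) K
end

section
/- Let 0 < μ ≤ L, p ≥ 1, and let B be the 2×2 matrix with diagonal entries (L+μ)/2 and off-diagonal entries (L−μ)/2. Then the spectrum of B is {μ, L}, and for any diagonal matrix N = diag(α, β), the eigenvalues σ_{1,2} of −NB satisfy max{|σ_1^{1/p} − 1|, |σ_2^{1/p} − 1|} ≥ max{|(−νμ)^{1/p} − 1|, |(−νL)^{1/p} − 1|} where ν = (α+β)/2, provided σ_1, σ_2 ≥ 0. -/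
/-!
Write `ν = (α + β) / 2`. The eigenvalues `σ₂ ≤ σ₁` of `-NB` are the roots of
`t² + 2ht + αβLμ` with `h = (α + β)(L + μ)/4`, and at `t = -νμ` and `t = -νL` this quadratic
takes the value `-Lμ((α - β)/2)² ≤ 0`. So both `-νμ` and `-νL` lie in `[σ₂, σ₁]`, and
`t ↦ |t^{1/p} - 1|`, being the distance of a monotone function to `1`, is largest on that
interval at an endpoint.
-/

theorem Matrix.spectrum_of_fin_two_symm {K : Type*} [Field K] (a b : K) :
    spectrum K (Matrix.of ![![a, b], ![b, a]]) = {a - b, a + b} := by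
  ext x
  have hdet : (algebraMap K (Matrix (Fin 2) (Fin 2) K) x - Matrix.of ![![a, b], ![b, a]]).det
      = (x - (a - b)) * (x - (a + b)) := by
    simp only [det_fin_two, sub_apply, algebraMap_matrix_apply, Algebra.algebraMap_self,
      RingHom.id_apply, of_apply, cons_val', cons_val_zero, cons_val_one, cons_val_fin_one,
      Fin.isValue, zero_ne_one, one_ne_zero, if_true, if_false]
    ring
  simp only [spectrum.mem_iff, Matrix.isUnit_iff_isUnit_det, isUnit_iff_ne_zero, not_not, hdet,
    mul_eq_zero, sub_eq_zero, Set.mem_insert_iff, Set.mem_singleton_iff]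

theorem Real.abs_rpow_sub_one_le_max {a b x q : ℝ} (ha : 0 ≤ a) (hax : a ≤ x) (hxb : x ≤ b)
    (hq : 0 ≤ q) : |x ^ q - 1| ≤ max |a ^ q - 1| |b ^ q - 1| :=
  abs_le_max_abs_abs (sub_le_sub_right (Real.rpow_le_rpow ha hax hq) 1)
    (sub_le_sub_right (Real.rpow_le_rpow (ha.trans hax) hxb hq) 1)

theorem mem_Icc_of_sq_add_two_mul_add_nonpos {h c t : ℝ} (ht : t ^ 2 + 2 * h * t + c ≤ 0) :
    t ∈ Set.Icc (-h - √(h ^ 2 - c)) (-h + √(h ^ 2 - c)) := by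
  have habs : |t + h| ≤ √(h ^ 2 - c) := Real.abs_le_sqrt (by nlinarith)
  constructor <;> linarith [abs_le.mp habs]

theorem neg_mean_mul_mem_Icc {α β x y : ℝ} (hxy : 0 ≤ x * y) :
    -((α + β) / 2) * x ∈ Set.Icc
      (-(α + β) * (x + y) / 4 - √(((α + β) * (x + y) / 4) ^ 2 - α * β * x * y))
      (-(α + β) * (x + y) / 4 + √(((α + β) * (x + y) / 4) ^ 2 - α * β * x * y)) := by
  have hval : (-((α + β) / 2) * x) ^ 2 + 2 * ((α + β) * (x + y) / 4) * (-((α + β) / 2) * x)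
      + α * β * x * y = -(x * y * ((α - β) / 2) ^ 2) := by ring
  have hnonpos := hval.trans_le (neg_nonpos.mpr (mul_nonneg hxy (sq_nonneg _)))
  simpa only [neg_mul, neg_div] using mem_Icc_of_sq_add_two_mul_add_nonpos hnonpos

theorem stmt17_general (μ L : ℝ) (hμ : 0 < μ) (hμL : μ ≤ L) (p : ℕ)
    (B : Matrix (Fin 2) (Fin 2) ℝ)
    (hB : B = Matrix.of ![![(L + μ) / 2, (L - μ) / 2], ![(L - μ) / 2, (L + μ) / 2]]) :
    spectrum ℝ B = {μ, L} ∧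
    ∀ α β : ℝ,
      (fun σ1 σ2 ν =>
        0 ≤ σ1 → 0 ≤ σ2 →
          max |(-ν * μ) ^ ((p : ℝ)⁻¹) - 1| |(-ν * L) ^ ((p : ℝ)⁻¹) - 1| ≤
            max |σ1 ^ ((p : ℝ)⁻¹) - 1| |σ2 ^ ((p : ℝ)⁻¹) - 1|)
        (-(α + β) * (L + μ) / 4 +
          Real.sqrt (((α + β) * (L + μ) / 4) ^ 2 - α * β * L * μ))
        (-(α + β) * (L + μ) / 4 -
          Real.sqrt (((α + β) * (L + μ) / 4) ^ 2 - α * β * L * μ))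
        ((α + β) / 2) := by
  refine ⟨?_, fun α β _ hσ₂ => ?_⟩
  · rw [hB, Matrix.spectrum_of_fin_two_symm]
    congr 1 <;> ring_nf
  have hLμ : 0 ≤ L * μ := mul_nonneg (hμ.le.trans hμL) hμ.le
  obtain ⟨hσ₂L, hLσ₁⟩ := neg_mean_mul_mem_Icc (α := α) (β := β) hLμ
  obtain ⟨hσ₂μ, hμσ₁⟩ := neg_mean_mul_mem_Icc (α := α) (β := β) (mul_comm L μ ▸ hLμ)
  rw [add_comm μ L, mul_right_comm (α * β) μ L] at hσ₂μ hμσ₁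
  have hq : (0 : ℝ) ≤ (p : ℝ)⁻¹ := by positivity
  exact max_le ((Real.abs_rpow_sub_one_le_max hσ₂ hσ₂μ hμσ₁ hq).trans_eq (max_comm _ _))
    ((Real.abs_rpow_sub_one_le_max hσ₂ hσ₂L hLσ₁ hq).trans_eq (max_comm _ _))

theorem stmt17 (μ L : ℝ) (hμ : 0 < μ) (hμL : μ ≤ L) (p : ℕ) (hp : 1 ≤ p)
    (B : Matrix (Fin 2) (Fin 2) ℝ)
    (hB : B = Matrix.of ![![(L + μ) / 2, (L - μ) / 2], ![(L - μ) / 2, (L + μ) / 2]]) :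
    spectrum ℝ B = {μ, L} ∧
    ∀ α β : ℝ,
      (fun σ1 σ2 ν =>
        0 ≤ σ1 → 0 ≤ σ2 →
          max |(-ν * μ) ^ ((p : ℝ)⁻¹) - 1| |(-ν * L) ^ ((p : ℝ)⁻¹) - 1| ≤
            max |σ1 ^ ((p : ℝ)⁻¹) - 1| |σ2 ^ ((p : ℝ)⁻¹) - 1|)
        (-(α + β) * (L + μ) / 4 +
          Real.sqrt (((α + β) * (L + μ) / 4) ^ 2 - α * β * L * μ))
        (-(α + β) * (L + μ) / 4 -
          Real.sqrt (((α + β) * (L + μ) / 4) ^ 2 - α * β * L * μ))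
        ((α + β) / 2) :=
  stmt17_general μ L hμ hμL p B hB
end
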